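/- arXiv:math/0401057 — 3 statements merged into one kernel-verified Lean document; each statement's English description precedes it below -/
import Mathlib

section
/- For every natural number m and all real numbers x, y, z, one has (x+(m+1)z) · Σ_{n=0}^{m} (-1)^n · C(x+y+nz, m-n) · C(y+n(z+1), n) = z · Σ_{0≤l≤n≤m} (-1)^n · C(n,l) · C(x+l, m-n) · (1+z)^{n+l} · (1-z)^{n-l} + (x-m) · C(x,m). -/
open Finset PowerSeries

/-- Generalized binomial coefficient `C(x, k) = x(x-1)⋯(x-k+1)/k!` for real `x`. -/
noncomputable def gchoose (x : ℝ) (k : ℕ) : ℝ :=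
  (∏ i ∈ Finset.range k, (x - i)) / (Nat.factorial k)

/-- The binomial series `(1+t)^x = Σ C(x,k) t^k` as a formal power series. -/
noncomputable def binomSeries (x : ℝ) : PowerSeries ℝ :=
  PowerSeries.mk fun k => gchoose x k

/-!
Both sides are expanded in the basis `C(x, i)` by Chu–Vandermonde. On the left, absorbing
`C(y + n(z+1), n)` makes the coefficient of `C(x, i)` the `(m-i)`-th finite difference with step
`z + 1` of the degree `m - i` polynomial `t ↦ C(y + t(z+1), m-i)`, namely `(-(1+z))^(m-i)`.
On the right, the sum over `l` collapses by the binomial theorem (as `(1+z) + (1-z) = 2`) and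
leaves `(1+z)^(m-i) U_{m-i}(-1) = (1+z)^(m-i) (-1)^(m-i) (m-i+1)`, `U` the Chebyshev polynomial.
Splitting `x + (m+1)z = (x + jz) + z(m-j+1)`, what remains is
`Σ_j C(x,j) (-(1+z))^(m-j) (x + jz) = (x-m) C(x,m)`, which telescopes through
`(k+1) C(x,k+1) = (x-k) C(x,k)`.
-/

theorem gchoose_eq_ringChoose (x : ℝ) (k : ℕ) : gchoose x k = Ring.choose x k := by
  rw [Ring.choose_eq_smul, ← Polynomial.aeval_eq_smeval, Polynomial.aeval_def,
    ← Polynomial.eval_map, descPochhammer_map, descPochhammer_eval_eq_prod_range, smul_eq_mul,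
    gchoose, div_eq_inv_mul]

theorem gchoose_natCast (n k : ℕ) : gchoose n k = n.choose k := by
  rw [gchoose_eq_ringChoose, Ring.choose_natCast]

theorem gchoose_add (a b : ℝ) (m : ℕ) :
    gchoose (a + b) m = ∑ j ∈ range (m + 1), gchoose a j * gchoose b (m - j) := by
  simp only [gchoose_eq_ringChoose]
  rw [Ring.add_choose_eq m (Commute.all a b), Nat.sum_antidiagonal_eq_sum_range_succ_mk]

theorem choose_mul_gchoose (a : ℝ) {n k : ℕ} (hkn : k ≤ n) :
    n.choose k * gchoose a n = gchoose a k * gchoose (a - k) (n - k) := by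
  simp only [gchoose_eq_ringChoose]
  rw [← Ring.choose_smul_choose a hkn, nsmul_eq_mul]

theorem succ_mul_gchoose_succ (x : ℝ) (k : ℕ) :
    (k + 1) * gchoose x (k + 1) = (x - k) * gchoose x k := by
  simp only [gchoose, prod_range_succ, Nat.factorial_succ, Nat.cast_mul, Nat.cast_succ]
  field_simp

namespace Polynomial

variable {R : Type*} [CommRing R]

theorem fwdDiff_iter_eval_of_natDegree_le {P : R[X]} {n : ℕ} (hP : P.natDegree ≤ n) (y : R) :
    (fwdDiff 1)^[n] P.eval y = P.coeff n * n.factorial := by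
  rcases hP.lt_or_eq with hlt | rfl
  · rw [fwdDiff_iter_eq_zero_of_degree_lt hlt, coeff_eq_zero_of_natDegree_lt hlt, Pi.zero_apply,
      zero_mul]
  · rw [fwdDiff_iter_degree_eq_factorial, Pi.smul_apply, Pi.natCast_apply, smul_eq_mul,
      leadingCoeff]

theorem sum_range_neg_one_pow_mul_choose_mul_eval {P : R[X]} {n : ℕ} (hP : P.natDegree ≤ n) :
    ∑ k ∈ range (n + 1), (-1) ^ k * n.choose k * P.eval (k : R) =
      (-1) ^ n * n.factorial * P.coeff n := by
  have h := fwdDiff_iter_eval_of_natDegree_le hP 0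
  rw [fwdDiff_iter_eq_sum_shift] at h
  rw [mul_assoc, mul_comm _ (P.coeff n), ← h, mul_sum]
  refine sum_congr rfl fun k hk => ?_
  have hsign : (-1 : R) ^ n = (-1) ^ (n - k) * (-1) ^ k := by
    rw [← pow_add, Nat.sub_add_cancel (Nat.lt_succ_iff.mp (mem_range.mp hk))]
  have hsq : ((-1 : R) ^ (n - k)) ^ 2 = 1 := by rw [← pow_mul, pow_mul', neg_one_sq, one_pow]
  simp only [zero_add, nsmul_one, zsmul_eq_mul, Int.cast_mul, Int.cast_pow, Int.cast_neg,
    Int.cast_one, Int.cast_natCast, hsign]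
  linear_combination -(-1) ^ k * (n.choose k : R) * eval (k : R) P * hsq

end Polynomial

theorem exists_eval_eq_gchoose_affine (r : ℕ) (y h : ℝ) :
    ∃ P : Polynomial ℝ, P.natDegree ≤ r ∧ P.coeff r = h ^ r / r.factorial ∧
      ∀ t, P.eval t = gchoose (y + t * h) r := by
  have hlin : ∀ i ∈ range r,
      (Polynomial.C h * Polynomial.X + Polynomial.C (y - i)).natDegree ≤ 1 :=
    fun _ _ => Polynomial.natDegree_linear_le
  refine ⟨Polynomial.C (r.factorial : ℝ)⁻¹ *
      ∏ i ∈ range r, (Polynomial.C h * Polynomial.X + Polynomial.C (y - i)),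
    ?_, ?_, fun t => ?_⟩
  · refine (Polynomial.natDegree_C_mul_le _ _).trans ((Polynomial.natDegree_prod_le _ _).trans ?_)
    simpa using sum_le_sum hlin
  · have htop := Polynomial.coeff_prod_of_natDegree_le _ _ 1 hlin
    rw [card_range, mul_one] at htop
    rw [Polynomial.coeff_C_mul, htop, div_eq_inv_mul]
    simp
  · simp only [Polynomial.eval_mul, Polynomial.eval_C, Polynomial.eval_prod, Polynomial.eval_add,
      Polynomial.eval_X, gchoose, div_eq_inv_mul]
    congr 1
    exact prod_congr rfl fun i _ => by ring

theorem sum_range_neg_one_pow_mul_choose_mul_gchoose (r : ℕ) (y h : ℝ) :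
    ∑ n ∈ range (r + 1), (-1) ^ n * r.choose n * gchoose (y + n * h) r = (-h) ^ r := by
  obtain ⟨P, hdeg, hcoeff, heval⟩ := exists_eval_eq_gchoose_affine r y h
  simp_rw [← heval]
  rw [Polynomial.sum_range_neg_one_pow_mul_choose_mul_eval hdeg, hcoeff, neg_pow h r]
  field_simp

theorem sum_range_sum_range_tsub_comm {M : Type*} [AddCommMonoid M] (m : ℕ)
    (f : ℕ → ℕ → M) :
    ∑ n ∈ range (m + 1), ∑ i ∈ range (m - n + 1), f n i =
      ∑ i ∈ range (m + 1), ∑ n ∈ range (m - i + 1), f n i :=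
  sum_comm' fun n i => by simp only [mem_range]; omega

theorem sum_range_choose_mul_choose_mul_pow {R : Type*} [CommRing R] (a b : R) (n s : ℕ) :
    ∑ l ∈ range (n + 1), n.choose l * l.choose s * a ^ l * b ^ (n - l) =
      n.choose s * a ^ s * (a + b) ^ (n - s) := by
  rcases lt_or_ge n s with hns | hsn
  · rw [Nat.choose_eq_zero_of_lt hns, Nat.cast_zero, zero_mul, zero_mul]
    refine sum_eq_zero fun l hl => ?_
    have hls : l < s := by rw [mem_range] at hl; omega
    simp [Nat.choose_eq_zero_of_lt hls]
  obtain ⟨t, rfl⟩ := Nat.exists_eq_add_of_le hsn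
  rw [show s + t + 1 = s + (t + 1) by ring, sum_range_add, add_pow, mul_sum,
    sum_eq_zero fun l hl => by rw [Nat.choose_eq_zero_of_lt (mem_range.mp hl)]; simp, zero_add,
    Nat.add_sub_cancel_left]
  refine sum_congr rfl fun j hj => ?_
  have hjt : j ≤ t := Nat.lt_succ_iff.mp (mem_range.mp hj)
  have hchoose : ((s + t).choose (s + j) * (s + j).choose s : R) =
      (s + t).choose s * t.choose j := by
    have h := Nat.choose_mul (n := s + t) (Nat.le_add_right s j)
    rw [Nat.add_sub_cancel_left, Nat.add_sub_cancel_left] at h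
    exact_mod_cast congrArg (Nat.cast (R := R)) h
  rw [show s + t - (s + j) = t - j by omega, pow_add]
  linear_combination a ^ s * a ^ j * b ^ (t - j) * hchoose

-- The Chebyshev expansion `U_k = Σ_j (-1)^j C(k-j, j) (2X)^(k-2j)` at `X = -1`, indexed by
-- `(n, j) = (k - j, j)`; the truncated `p.1 - p.2` only matters where `p.1.choose p.2 = 0`.
def alternatingDiagonalSum (R : Type*) [CommRing R] (k : ℕ) : R :=
  ∑ p ∈ antidiagonal k, (-1 : R) ^ p.1 * p.1.choose p.2 * 2 ^ (p.1 - p.2)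

section alternatingDiagonalSum

variable {R : Type*} [CommRing R]

theorem alternatingDiagonalSum_succ (k : ℕ) :
    alternatingDiagonalSum R (k + 1) = (-1) ^ (k + 1) * 2 ^ (k + 1) +
      ∑ p ∈ antidiagonal k, (-1 : R) ^ p.1 * p.1.choose (p.2 + 1) * 2 ^ (p.1 - (p.2 + 1)) := by
  simp [alternatingDiagonalSum, Nat.sum_antidiagonal_succ']

theorem alternatingDiagonalSum_add_two (k : ℕ) :
    alternatingDiagonalSum R (k + 2) =
      -2 * alternatingDiagonalSum R (k + 1) - alternatingDiagonalSum R k := by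
  have hdouble : ∀ p ∈ antidiagonal k, (-1 : R) ^ p.1 * p.1.choose (p.2 + 1) * 2 ^ (p.1 - p.2) =
      2 * ((-1 : R) ^ p.1 * p.1.choose (p.2 + 1) * 2 ^ (p.1 - (p.2 + 1))) := by
    intro p _
    rcases lt_or_ge p.1 (p.2 + 1) with h | h
    · simp [Nat.choose_eq_zero_of_lt h]
    · rw [show p.1 - p.2 = p.1 - (p.2 + 1) + 1 by omega, pow_succ]
      ring
  have hpascal : alternatingDiagonalSum R (k + 2) = (-1) ^ (k + 2) * 2 ^ (k + 2) -
      ∑ p ∈ antidiagonal k,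
        (-1 : R) ^ p.1 * (p.1.choose p.2 + p.1.choose (p.2 + 1)) * 2 ^ (p.1 - p.2) := by
    rw [alternatingDiagonalSum, Nat.sum_antidiagonal_succ, Nat.sum_antidiagonal_succ',
      sub_eq_add_neg, ← sum_neg_distrib]
    simp [Nat.choose_succ_succ, pow_succ]
  rw [hpascal]
  simp only [mul_add, add_mul, sum_add_distrib]
  rw [sum_congr rfl hdouble, ← mul_sum, alternatingDiagonalSum_succ k, alternatingDiagonalSum,
    pow_succ, pow_succ]
  ring

theorem alternatingDiagonalSum_eq (k : ℕ) : alternatingDiagonalSum R k = (-1) ^ k * (k + 1) := by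
  induction k using Nat.twoStepInduction with
  | zero => simp [alternatingDiagonalSum]
  | one => norm_num [alternatingDiagonalSum, Nat.sum_antidiagonal_succ]
  | more k ih₀ ih₁ => rw [alternatingDiagonalSum_add_two, ih₀, ih₁]; push_cast; ring

end alternatingDiagonalSum

theorem sum_neg_one_pow_mul_gchoose_mul_gchoose (m : ℕ) (x y z : ℝ) :
    ∑ n ∈ range (m + 1),
        (-1) ^ n * gchoose (x + y + n * z) (m - n) * gchoose (y + n * (z + 1)) n =
      ∑ i ∈ range (m + 1), gchoose x i * (-(z + 1)) ^ (m - i) := by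
  calc _ = ∑ n ∈ range (m + 1), ∑ i ∈ range (m - n + 1),
        gchoose x i * ((-1) ^ n * (m - i).choose n * gchoose (y + n * (z + 1)) (m - i)) := by
        refine sum_congr rfl fun n hn => ?_
        rw [add_assoc, gchoose_add, mul_sum, sum_mul]
        refine sum_congr rfl fun i hi => ?_
        have hni : n ≤ m - i := by simp only [mem_range] at hn hi; omega
        have hchain := choose_mul_gchoose (y + n * (z + 1)) hni
        rw [show y + n * (z + 1) - n = y + n * z by ring, show m - i - n = m - n - i by omega]
          at hchain
        linear_combination -(-1) ^ n * gchoose x i * hchain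
    _ = ∑ i ∈ range (m + 1), gchoose x i * ∑ n ∈ range (m - i + 1),
        (-1) ^ n * (m - i).choose n * gchoose (y + n * (z + 1)) (m - i) := by
        rw [sum_range_sum_range_tsub_comm]
        simp_rw [mul_sum]
    _ = _ := by simp_rw [sum_range_neg_one_pow_mul_choose_mul_gchoose]

theorem sum_sum_neg_one_pow_mul_choose_mul_gchoose_mul_pow (m : ℕ) (x a b : ℝ)
    (hab : a + b = 2) :
    ∑ n ∈ range (m + 1), ∑ l ∈ range (n + 1),
        (-1) ^ n * n.choose l * gchoose (x + l) (m - n) * a ^ (n + l) * b ^ (n - l) =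
      ∑ i ∈ range (m + 1), gchoose x i * ((((m - i : ℕ) : ℝ) + 1) * (-a) ^ (m - i)) := by
  calc _ = ∑ n ∈ range (m + 1), ∑ i ∈ range (m - n + 1), gchoose x i *
        ((-1) ^ n * n.choose (m - n - i) * 2 ^ (n - (m - n - i)) * a ^ (n + (m - n - i))) := by
        refine sum_congr rfl fun n _ => ?_
        simp_rw [gchoose_add x, gchoose_natCast, mul_sum, sum_mul]
        rw [sum_comm]
        refine sum_congr rfl fun i _ => ?_
        have hl := sum_range_choose_mul_choose_mul_pow a b n (m - n - i)
        rw [hab] at hl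
        trans gchoose x i * (-1) ^ n * a ^ n *
          ∑ l ∈ range (n + 1), n.choose l * l.choose (m - n - i) * a ^ l * b ^ (n - l)
        · rw [mul_sum]
          exact sum_congr rfl fun l _ => by rw [pow_add]; ring
        · rw [hl, pow_add]
          ring
    _ = ∑ i ∈ range (m + 1),
        gchoose x i * (a ^ (m - i) * alternatingDiagonalSum ℝ (m - i)) := by
        rw [sum_range_sum_range_tsub_comm]
        refine sum_congr rfl fun i _ => ?_
        rw [alternatingDiagonalSum, Nat.sum_antidiagonal_eq_sum_range_succ_mk, mul_sum, mul_sum]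
        refine sum_congr rfl fun n hn => ?_
        have hni : n ≤ m - i := Nat.lt_succ_iff.mp (mem_range.mp hn)
        rw [show m - n - i = m - i - n by omega, show n + (m - i - n) = m - i by omega]
        ring
    _ = _ := by
        refine sum_congr rfl fun i _ => ?_
        rw [alternatingDiagonalSum_eq, neg_pow a]
        ring

theorem sum_range_gchoose_mul_pow_mul (m : ℕ) (x z : ℝ) :
    ∑ j ∈ range (m + 1), gchoose x j * (-(1 + z)) ^ (m - j) * (x + j * z) =
      (x - m) * gchoose x m := by
  induction m with
  | zero => simp [gchoose]
  | succ m ih =>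
    rw [sum_range_succ, Nat.sub_self, pow_zero, mul_one]
    have hshift : ∑ j ∈ range (m + 1), gchoose x j * (-(1 + z)) ^ (m + 1 - j) * (x + j * z) =
        -(1 + z) * ∑ j ∈ range (m + 1), gchoose x j * (-(1 + z)) ^ (m - j) * (x + j * z) := by
      rw [mul_sum]
      refine sum_congr rfl fun j hj => ?_
      rw [show m + 1 - j = m - j + 1 by have := mem_range.mp hj; omega, pow_succ]
      ring
    rw [hshift, ih, ← succ_mul_gchoose_succ]
    push_cast
    ring

theorem sun_wu_extension (m : ℕ) (x y z : ℝ) :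
    (x + (m + 1) * z) *
        ∑ n ∈ Finset.range (m + 1),
          (-1 : ℝ) ^ n * gchoose (x + y + n * z) (m - n) * gchoose (y + n * (z + 1)) n =
      z * ∑ n ∈ Finset.range (m + 1), ∑ l ∈ Finset.range (n + 1),
            (-1 : ℝ) ^ n * (n.choose l : ℝ) * gchoose (x + l) (m - n) *
              (1 + z) ^ (n + l) * (1 - z) ^ (n - l) +
        (x - m) * gchoose x m := by
  rw [sum_neg_one_pow_mul_gchoose_mul_gchoose,
    sum_sum_neg_one_pow_mul_choose_mul_gchoose_mul_pow m x (1 + z) (1 - z) (by ring),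
    ← sum_range_gchoose_mul_pow_mul m x z, mul_sum, mul_sum, ← sum_add_distrib]
  refine sum_congr rfl fun j hj => ?_
  rw [Nat.cast_sub (Nat.lt_succ_iff.mp (mem_range.mp hj))]
  ring
end

section
/- For every natural number m and all real numbers x and y, one has (x+m+1) · Σ_{n=0}^{m} (-1)^n · C(x+y+n, m-n) · C(y+2n, n) = Σ_{n=0}^{m} C(x+n, m-n) · (-4)^n + (x-m) · C(x,m). -/
open Finset PowerSeries

@[simp]
theorem gchoose_zero_right (x : ℝ) : gchoose x 0 = 1 := by
  simp [gchoose_eq_ringChoose]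

@[simp]
theorem gchoose_zero_succ (k : ℕ) : gchoose 0 (k + 1) = 0 := by
  simp [gchoose_eq_ringChoose, Ring.choose_zero_succ]

@[simp]
theorem gchoose_one_right (x : ℝ) : gchoose x 1 = x := by
  simp [gchoose_eq_ringChoose]

theorem gchoose_succ_succ (x : ℝ) (k : ℕ) :
    gchoose (x + 1) (k + 1) = gchoose x k + gchoose x (k + 1) := by
  simp only [gchoose_eq_ringChoose, Ring.choose_succ_succ]

theorem succ_mul_gchoose_add_one_succ (x : ℝ) (k : ℕ) :
    (k + 1) * gchoose (x + 1) (k + 1) = (x + 1) * gchoose x k := by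
  linear_combination (k + 1) * gchoose_succ_succ x k + succ_mul_gchoose_succ x k

theorem sub_mul_gchoose_add_one (x : ℝ) (k : ℕ) :
    (x + 1 - k) * gchoose (x + 1) k = (x + 1) * gchoose x k := by
  linear_combination succ_mul_gchoose_add_one_succ x k - succ_mul_gchoose_succ (x + 1) k

def polyFns : Subalgebra ℝ (ℝ → ℝ) := Algebra.adjoin ℝ {id}

theorem id_mem_polyFns : (fun t => t) ∈ polyFns := Algebra.subset_adjoin rfl

theorem const_mem_polyFns (c : ℝ) : (fun _ => c) ∈ polyFns := algebraMap_mem _ c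

theorem add_const_mem_polyFns (c : ℝ) : (fun t => t + c) ∈ polyFns :=
  add_mem id_mem_polyFns (const_mem_polyFns c)

theorem gchoose_comp_mem_polyFns {f : ℝ → ℝ} (hf : f ∈ polyFns) (k : ℕ) :
    (fun t => gchoose (f t) k) ∈ polyFns := by
  have hprod : (fun t => gchoose (f t) k) =
      algebraMap ℝ _ (k.factorial : ℝ)⁻¹ * ∏ i ∈ range k, (f - algebraMap ℝ _ i) := by
    ext t; simp [gchoose, Finset.prod_apply, div_eq_inv_mul]
  rw [hprod]
  exact mul_mem (algebraMap_mem _ _) (prod_mem fun i _ => sub_mem hf (algebraMap_mem _ _))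

theorem apply_eq_apply_zero_of_mem_polyFns_of_periodic {f : ℝ → ℝ} {c : ℝ}
    (hf : f ∈ polyFns) (hper : Function.Periodic f c) (hc : c ≠ 0) (t : ℝ) : f t = f 0 := by
  rw [polyFns, Algebra.adjoin_singleton_eq_range_aeval] at hf
  obtain ⟨p, rfl⟩ := (AlgHom.mem_range _).mp hf
  simp only [Polynomial.aeval_fn_apply, id, Polynomial.coe_aeval_eq_eval] at hper ⊢
  suffices p = Polynomial.C (p.eval 0) by rw [this, Polynomial.eval_C, Polynomial.eval_C]
  refine Polynomial.eq_of_infinite_eval_eq _ _ ((Set.infinite_range_of_injective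
    ((mul_left_injective₀ hc).comp Nat.cast_injective)).mono ?_)
  rintro _ ⟨n, rfl⟩
  simpa using hper.nat_mul_eq n

noncomputable def lhsSum (m : ℕ) (x y : ℝ) : ℝ :=
  ∑ n ∈ range (m + 1), (-1 : ℝ) ^ n * gchoose (x + y + n) (m - n) * gchoose (y + 2 * n) n

noncomputable def rhsSum (m : ℕ) (x : ℝ) : ℝ :=
  ∑ n ∈ range (m + 1), gchoose (x + n) (m - n) * (-4 : ℝ) ^ n

noncomputable def geomBinomSum (m : ℕ) (x : ℝ) : ℝ :=
  ∑ k ∈ range (m + 1), gchoose x k * (-2 : ℝ) ^ (m - k)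

theorem lhsSum_succ_add_one_left (m : ℕ) (x y : ℝ) :
    lhsSum (m + 1) (x + 1) y = lhsSum (m + 1) x y + lhsSum m x y := by
  have pascal : ∀ n ∈ range (m + 1),
      (-1 : ℝ) ^ n * gchoose (x + 1 + y + n) (m + 1 - n) * gchoose (y + 2 * n) n =
        (-1) ^ n * gchoose (x + y + n) (m + 1 - n) * gchoose (y + 2 * n) n +
          (-1) ^ n * gchoose (x + y + n) (m - n) * gchoose (y + 2 * n) n := by
    intro n hn
    rw [Nat.sub_add_comm (mem_range_succ_iff.mp hn), show x + 1 + y + n = x + y + n + 1 by ring,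
      gchoose_succ_succ]
    ring
  rw [lhsSum, lhsSum, lhsSum, sum_range_succ, sum_range_succ _ (m + 1), sum_congr rfl pascal,
    sum_add_distrib]
  simp only [Nat.sub_self, gchoose_zero_right]
  ring

theorem lhsSum_succ_add_one_right (m : ℕ) (x y : ℝ) :
    lhsSum (m + 1) x (y + 1) + lhsSum m x (y + 2) = lhsSum (m + 1) (x + 1) y := by
  have pascal : ∀ n ∈ range (m + 1),
      (-1 : ℝ) ^ (n + 1) * gchoose (x + (y + 1) + (n + 1 : ℕ)) (m + 1 - (n + 1)) *
          gchoose (y + 1 + 2 * (n + 1 : ℕ)) (n + 1) +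
        (-1) ^ n * gchoose (x + (y + 2) + n) (m - n) * gchoose (y + 2 + 2 * n) n =
      (-1) ^ (n + 1) * gchoose (x + 1 + y + (n + 1 : ℕ)) (m + 1 - (n + 1)) *
          gchoose (y + 2 * (n + 1 : ℕ)) (n + 1) := by
    intro n _
    push_cast
    rw [show y + 1 + 2 * (n + 1 : ℝ) = y + 2 * (n + 1) + 1 by ring, gchoose_succ_succ,
      show y + 2 + 2 * (n : ℝ) = y + 2 * (n + 1) by ring,
      show x + (y + 1) + (n + 1 : ℝ) = x + 1 + y + (n + 1) by ring,
      show x + (y + 2) + (n : ℝ) = x + 1 + y + (n + 1) by ring]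
    ring
  rw [lhsSum, lhsSum, lhsSum, sum_range_succ' _ (m + 1), sum_range_succ' _ (m + 1),
    add_right_comm, ← sum_add_distrib, sum_congr rfl pascal]
  simp only [Nat.cast_zero, add_zero, mul_zero, gchoose_zero_right, add_assoc, add_right_comm x 1]

theorem rhsSum_succ_add_one (m : ℕ) (x : ℝ) :
    rhsSum (m + 1) (x + 1) = rhsSum (m + 1) x + rhsSum m x := by
  have pascal : ∀ n ∈ range (m + 1),
      gchoose (x + 1 + n) (m + 1 - n) * (-4 : ℝ) ^ n =
        gchoose (x + n) (m + 1 - n) * (-4) ^ n + gchoose (x + n) (m - n) * (-4) ^ n := by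
    intro n hn
    rw [Nat.sub_add_comm (mem_range_succ_iff.mp hn), add_right_comm, gchoose_succ_succ]
    ring
  rw [rhsSum, rhsSum, rhsSum, sum_range_succ, sum_range_succ _ (m + 1), sum_congr rfl pascal,
    sum_add_distrib]
  simp only [Nat.sub_self, gchoose_zero_right]
  ring

theorem rhsSum_succ (m : ℕ) (x : ℝ) :
    rhsSum (m + 1) x = gchoose x (m + 1) - 4 * rhsSum m (x + 1) := by
  rw [rhsSum, rhsSum, sum_range_succ', mul_sum]
  simp only [Nat.add_sub_add_right, Nat.cast_zero, add_zero, pow_zero, mul_one, Nat.sub_zero]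
  rw [sub_eq_neg_add, ← sum_neg_distrib]
  congr 1
  refine sum_congr rfl fun n _ => ?_
  rw [Nat.cast_succ, ← add_assoc, add_right_comm]
  ring

theorem geomBinomSum_succ (m : ℕ) (x : ℝ) :
    geomBinomSum (m + 1) x = gchoose x (m + 1) - 2 * geomBinomSum m x := by
  rw [geomBinomSum, sum_range_succ, Nat.sub_self, pow_zero, mul_one, geomBinomSum, mul_sum,
    add_comm, sub_eq_add_neg, ← sum_neg_distrib]
  congr 1
  refine sum_congr rfl fun k hk => ?_
  rw [Nat.sub_add_comm (mem_range_succ_iff.mp hk), pow_succ]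
  ring

theorem geomBinomSum_succ_add_one (m : ℕ) (x : ℝ) :
    geomBinomSum (m + 1) (x + 1) = geomBinomSum (m + 1) x + geomBinomSum m x := by
  induction m with
  | zero =>
    rw [geomBinomSum_succ 0, geomBinomSum_succ 0, gchoose_succ_succ]
    simp [geomBinomSum]
    ring
  | succ m ih =>
    rw [geomBinomSum_succ (m + 1), gchoose_succ_succ, ih, geomBinomSum_succ (m + 1),
      geomBinomSum_succ m]
    ring

theorem geomBinomSum_zero_right (m : ℕ) : geomBinomSum m 0 = (-2) ^ m := by
  induction m with
  | zero => simp [geomBinomSum]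
  | succ m ih => rw [geomBinomSum_succ, gchoose_zero_succ, ih]; ring

theorem lhsSum_mem_polyFns_left (m : ℕ) (y : ℝ) : (fun x => lhsSum m x y) ∈ polyFns := by
  rw [show (fun x => lhsSum m x y) = ∑ n ∈ range (m + 1), fun x =>
    (-1 : ℝ) ^ n * gchoose (x + (y + n)) (m - n) * gchoose (y + 2 * n) n by
      ext x; simp [lhsSum, add_assoc]]
  exact sum_mem fun n _ => mul_mem (mul_mem (const_mem_polyFns _)
    (gchoose_comp_mem_polyFns (add_const_mem_polyFns _) _)) (const_mem_polyFns _)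

theorem lhsSum_mem_polyFns_right (m : ℕ) (x : ℝ) : (fun y => lhsSum m x y) ∈ polyFns := by
  rw [show (fun y => lhsSum m x y) = ∑ n ∈ range (m + 1), fun y =>
    (-1 : ℝ) ^ n * gchoose (y + (x + n)) (m - n) * gchoose (y + 2 * n) n by
      ext y; simp [lhsSum, add_comm x y, add_assoc]]
  exact sum_mem fun n _ => mul_mem (mul_mem (const_mem_polyFns _)
    (gchoose_comp_mem_polyFns (add_const_mem_polyFns _) _))
    (gchoose_comp_mem_polyFns (add_const_mem_polyFns _) _)

theorem geomBinomSum_mem_polyFns (m : ℕ) : (fun x => geomBinomSum m x) ∈ polyFns := by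
  rw [show (fun x => geomBinomSum m x) = ∑ k ∈ range (m + 1), fun x =>
    gchoose x k * (-2 : ℝ) ^ (m - k) by ext x; simp [geomBinomSum]]
  exact sum_mem fun k _ =>
    mul_mem (gchoose_comp_mem_polyFns id_mem_polyFns _) (const_mem_polyFns _)

theorem lhsSum_eq_lhsSum_zero (m : ℕ) (x y : ℝ) : lhsSum m x y = lhsSum m x 0 := by
  induction m generalizing x y with
  | zero => simp [lhsSum]
  | succ m ih =>
    have hper : Function.Periodic (fun y => lhsSum (m + 1) x y) 1 := fun y => by
      have h := lhsSum_succ_add_one_right m x y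
      rw [lhsSum_succ_add_one_left, ih x (y + 2), ← ih x y] at h
      simpa using h
    exact apply_eq_apply_zero_of_mem_polyFns_of_periodic (lhsSum_mem_polyFns_right _ x) hper
      one_ne_zero y

theorem sq_succ_mul_gchoose_two_mul_succ (n : ℕ) :
    ((n : ℝ) + 1) ^ 2 * gchoose (2 * (n + 1)) (n + 1) =
      2 * (n + 1) * (2 * n + 1) * gchoose (2 * n) n := by
  have h1 := succ_mul_gchoose_add_one_succ (2 * n + 1) n
  have h2 := sub_mul_gchoose_add_one (2 * n) n
  rw [show (2 * n + 1 + 1 : ℝ) = 2 * (n + 1) by ring] at h1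
  rw [show (2 * n + 1 - n : ℝ) = n + 1 by ring] at h2
  linear_combination (n + 1 : ℝ) * h1 + (2 * n + 2 : ℝ) * h2

/-- Zeilberger's certificate for the recurrence `lhsSum (m + 1) 0 0 = -2 * lhsSum m 0 0`. -/
noncomputable def wzCert (m n : ℕ) : ℝ :=
  (-1) ^ (n + 1) * (2 * n - m - 1) * gchoose (2 * n) n * gchoose n (m + 1 - n)

theorem wzCert_sub (m n : ℕ) (hn : n ≤ m) :
    wzCert m (n + 1) - wzCert m n = (m + 1) * ((-1) ^ n * gchoose (2 * n) n *
      (gchoose n (m + 1 - n) + 2 * gchoose n (m - n))) := by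
  obtain ⟨k, rfl⟩ := Nat.exists_eq_add_of_le hn
  have hC := sq_succ_mul_gchoose_two_mul_succ n
  have hA := succ_mul_gchoose_succ (n : ℝ) k
  have hU := sub_mul_gchoose_add_one (n : ℝ) k
  have hne : ((n : ℝ) + 1) ^ 2 ≠ 0 := by positivity
  simp only [wzCert, show n + k + 1 - (n + 1) = k by omega, show n + k + 1 - n = k + 1 by omega,
    Nat.add_sub_cancel_left]
  apply mul_left_cancel₀ hne
  push_cast
  linear_combination (-1 : ℝ) ^ n * ((n - k + 1 : ℝ) * gchoose (n + 1) k * hC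
    - 2 * (n + 1) ^ 2 * gchoose (2 * n) n * hA + 2 * (n + 1) * (2 * n + 1) * gchoose (2 * n) n * hU)

theorem lhsSum_zero_zero (m : ℕ) : lhsSum m 0 0 = (-2) ^ m := by
  set t : ℕ → ℕ → ℝ := fun k n => (-1) ^ n * gchoose n (k - n) * gchoose (2 * n) n
  have ht : ∀ k, lhsSum k 0 0 = ∑ n ∈ range (k + 1), t k n := fun k => by simp [lhsSum, t]
  induction m with
  | zero => simp [ht, t]
  | succ m ih =>
    have step : ∀ n ∈ range (m + 1),
        (m + 1 : ℝ) * (t (m + 1) n + 2 * t m n) = wzCert m (n + 1) - wzCert m n :=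
      fun n hn => by
        rw [wzCert_sub m n (mem_range_succ_iff.mp hn)]
        ring
    have telescope : (m + 1 : ℝ) * (lhsSum (m + 1) 0 0 + 2 * lhsSum m 0 0) = 0 :=
      calc (m + 1 : ℝ) * (lhsSum (m + 1) 0 0 + 2 * lhsSum m 0 0)
          = ∑ n ∈ range (m + 1), (m + 1 : ℝ) * (t (m + 1) n + 2 * t m n) +
              (m + 1) * t (m + 1) (m + 1) := by
            simp only [ht, sum_range_succ _ (m + 1), mul_add, mul_sum, sum_add_distrib]
            ring
        _ = wzCert m (m + 1) - wzCert m 0 + (m + 1) * t (m + 1) (m + 1) := by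
            rw [sum_congr rfl step, sum_range_sub]
        _ = 0 := by
            simp [t, wzCert]
            ring
    have hm : (m + 1 : ℝ) ≠ 0 := by positivity
    rw [pow_succ, ← ih]
    linarith [(mul_eq_zero.mp telescope).resolve_left hm]

theorem lhsSum_eq_geomBinomSum (m : ℕ) (x y : ℝ) : lhsSum m x y = geomBinomSum m x := by
  rw [lhsSum_eq_lhsSum_zero]
  induction m generalizing x with
  | zero => simp [lhsSum, geomBinomSum]
  | succ m ih =>
    have hper : Function.Periodic (fun x => lhsSum (m + 1) x 0 - geomBinomSum (m + 1) x) 1 :=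
      fun x => by
        dsimp only
        rw [lhsSum_succ_add_one_left, geomBinomSum_succ_add_one, ih]
        ring
    have h := apply_eq_apply_zero_of_mem_polyFns_of_periodic
      (sub_mem (lhsSum_mem_polyFns_left _ 0) (geomBinomSum_mem_polyFns _)) hper one_ne_zero x
    simpa only [Pi.sub_apply, lhsSum_zero_zero, geomBinomSum_zero_right, sub_self,
      sub_eq_zero] using h

theorem rhsSum_add_sub_mul_gchoose (m : ℕ) (x : ℝ) :
    rhsSum m x + (x - m) * gchoose x m = (x + m + 1) * geomBinomSum m x := by
  induction m using Nat.twoStepInduction generalizing x with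
  | zero => simp [rhsSum, geomBinomSum]; ring
  | one =>
    simp [rhsSum, geomBinomSum, sum_range_succ]
    ring
  | more n ih1 ih2 =>
    have hrec : rhsSum (n + 2) x = gchoose x (n + 2) - 4 * rhsSum (n + 1) x - 4 * rhsSum n x := by
      rw [rhsSum_succ (n + 1), rhsSum_succ_add_one]
      ring
    have h2 := geomBinomSum_succ (n + 1) x
    have h1 := geomBinomSum_succ n x
    have hA2 := succ_mul_gchoose_succ x (n + 1)
    have hA1 := succ_mul_gchoose_succ x n
    push_cast at hA2 ih1 ih2 ⊢
    linear_combination hrec - 4 * ih2 x - 4 * ih1 x - (x + n + 3) * h2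
      - (2 * x + 2 * n + 2) * h1 - 2 * hA2 - 4 * hA1

theorem sun_curious_identity (m : ℕ) (x y : ℝ) :
    (x + m + 1) *
        ∑ n ∈ Finset.range (m + 1),
          (-1 : ℝ) ^ n * gchoose (x + y + n) (m - n) * gchoose (y + 2 * n) n =
      (∑ n ∈ Finset.range (m + 1), gchoose (x + n) (m - n) * (-4 : ℝ) ^ n) +
        (x - m) * gchoose x m := by
  rw [← lhsSum, lhsSum_eq_geomBinomSum, ← rhsSum, rhsSum_add_sub_mul_gchoose]
end

section
/- For every positive integer m and all real numbers x and z, one has (m+1) · [t^m]((1+t)^x/(1+t(z+1))) − [t^m]((1+t)^x/(1+t(z+1))^2) = [t^m](x·t·(1+t)^{x-1}/(1+t(z+1))), where [t^m] denotes the coefficient of t^m in a formal power series. -/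
open Finset PowerSeries

/-! For `G = (1 + a t)⁻¹` one has `G² = G + t G'`, and the Euler operator `t d/dt` multiplies the
`t^m` coefficient by `m`. Together these give `(m+1) [t^m](f G) - [t^m](f G²) = [t^m](t f' G)` for
every power series `f`, and `(1+t)^x` has derivative `x (1+t)^(x-1)`. -/

namespace PowerSeries

theorem coeff_X_mul_derivative {R : Type*} [CommSemiring R] (f : R⟦X⟧) (n : ℕ) :
    coeff n (X * d⁄dX R f) = n * coeff n f := by
  cases n with
  | zero => simp
  | succ n => rw [coeff_succ_X_mul, coeff_derivative, mul_comm]; push_cast; rfl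

variable {k : Type*} [Field k]

theorem inv_pow_one_add_C_mul_X (a : k) (n : ℕ) : ((1 + C a * X) ^ n)⁻¹ = (1 + C a * X)⁻¹ ^ n := by
  rw [PowerSeries.inv_eq_iff_mul_eq_one (by simp), ← mul_pow,
    PowerSeries.inv_mul_cancel _ (by simp), one_pow]

theorem inv_one_add_C_mul_X_sq (a : k) :
    (1 + C a * X)⁻¹ ^ 2 = (1 + C a * X)⁻¹ + X * d⁄dX k (1 + C a * X)⁻¹ := by
  have hinv : (1 + C a * X) * (1 + C a * X)⁻¹ = 1 := PowerSeries.mul_inv_cancel _ (by simp)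
  have hderiv : d⁄dX k (1 + C a * X) = C a := by simp
  rw [derivative_inv', hderiv]
  linear_combination (1 + C a * X)⁻¹ * hinv

theorem succ_mul_coeff_mul_inv_sub_coeff_mul_inv_sq (f : k⟦X⟧) (a : k) (m : ℕ) :
    ((m : k) + 1) * coeff m (f * (1 + C a * X)⁻¹) - coeff m (f * ((1 + C a * X) ^ 2)⁻¹) =
      coeff m (X * d⁄dX k f * (1 + C a * X)⁻¹) := by
  set G := (1 + C a * X)⁻¹
  have hsq : f * ((1 + C a * X) ^ 2)⁻¹ = f * G + X * (f * d⁄dX k G) := by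
    rw [inv_pow_one_add_C_mul_X, inv_one_add_C_mul_X_sq]; ring
  have hleibniz : X * d⁄dX k (f * G) = X * (f * d⁄dX k G) + X * d⁄dX k f * G := by
    rw [Derivation.leibniz, smul_eq_mul, smul_eq_mul]; ring
  have euler := coeff_X_mul_derivative (f * G) m
  rw [hleibniz, map_add] at euler
  rw [hsq, map_add]
  linear_combination -euler

end PowerSeries

theorem gchoose_succ_mul (x : ℝ) (k : ℕ) : gchoose x (k + 1) * (k + 1) = x * gchoose (x - 1) k := by
  have hshift : ∀ i ∈ range k, x - ((i + 1 : ℕ) : ℝ) = x - 1 - i := fun i _ => by push_cast; ring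
  rw [gchoose, gchoose, prod_range_succ', prod_congr rfl hshift, Nat.factorial_succ]
  push_cast
  field_simp
  ring

theorem derivative_binomSeries (x : ℝ) : d⁄dX ℝ (binomSeries x) = C x * binomSeries (x - 1) := by
  ext n
  rw [coeff_derivative, coeff_C_mul, binomSeries, binomSeries, coeff_mk, coeff_mk, gchoose_succ_mul]

theorem coeff_recurrence_general (m : ℕ) (x z : ℝ) :
    (m + 1 : ℝ) *
          PowerSeries.coeff (R := ℝ) m
            (binomSeries x * (1 + PowerSeries.C (R := ℝ) (z + 1) * PowerSeries.X)⁻¹) -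
        PowerSeries.coeff (R := ℝ) m
          (binomSeries x * ((1 + PowerSeries.C (R := ℝ) (z + 1) * PowerSeries.X) ^ 2)⁻¹) =
      PowerSeries.coeff (R := ℝ) m
        (PowerSeries.C (R := ℝ) x * PowerSeries.X * binomSeries (x - 1) *
          (1 + PowerSeries.C (R := ℝ) (z + 1) * PowerSeries.X)⁻¹) := by
  rw [succ_mul_coeff_mul_inv_sub_coeff_mul_inv_sq, derivative_binomSeries]
  congr 1
  ring

theorem coeff_recurrence (m : ℕ) (hm : 0 < m) (x z : ℝ) :
    (m + 1 : ℝ) *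
          PowerSeries.coeff (R := ℝ) m
            (binomSeries x * (1 + PowerSeries.C (R := ℝ) (z + 1) * PowerSeries.X)⁻¹) -
        PowerSeries.coeff (R := ℝ) m
          (binomSeries x * ((1 + PowerSeries.C (R := ℝ) (z + 1) * PowerSeries.X) ^ 2)⁻¹) =
      PowerSeries.coeff (R := ℝ) m
        (PowerSeries.C (R := ℝ) x * PowerSeries.X * binomSeries (x - 1) *
          (1 + PowerSeries.C (R := ℝ) (z + 1) * PowerSeries.X)⁻¹) :=
  coeff_recurrence_general m x z
end
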